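/- arXiv:1109.4772 — 4 statements merged into one kernel-verified Lean document; each statement's English description precedes it below -/
import Mathlib

section
/- Let 𝒟 be a quantum Poisson algebra with basic algebra 𝒜 that is quasi-distinguishing: for every element P of the classical limit S(𝒟), if {P, 𝒜} = 0 then P ∈ 𝒜. Then for every i ∈ ℕ, the set {D ∈ 𝒟 : [D, 𝒜] ⊆ 𝒟^i} equals 𝒟^{i+1}. -/
/-- A quantum Poisson algebra over ℝ: a filtered associative algebra `D` with
`𝒟^k · 𝒟^l ⊆ 𝒟^{k+l}`, `[𝒟^k, 𝒟^l] ⊆ 𝒟^{k+l-1}` and commutative degree-0 part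
(the basic algebra `𝒜 = 𝒟^0`).  The filtration is indexed by `ℤ` with trivial
negative part. -/
structure QuantumPoissonAlgebra (D : Type*) [Ring D] [Algebra ℝ D] where
  filt : ℤ → Submodule ℝ D
  filt_bot : ∀ k : ℤ, k < 0 → filt k = ⊥
  filt_mono : Monotone filt
  filt_exhaustive : ∀ d : D, ∃ k : ℤ, d ∈ filt k
  one_mem : (1 : D) ∈ filt 0
  mul_mem : ∀ (k l : ℤ) (d t : D), d ∈ filt k → t ∈ filt l → d * t ∈ filt (k + l)
  lie_mem : ∀ (k l : ℤ) (d t : D), d ∈ filt k → t ∈ filt l → ⁅d, t⁆ ∈ filt (k + l - 1)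
  basic_comm : ∀ u ∈ filt 0, ∀ v ∈ filt 0, u * v = v * u

namespace QuantumPoissonAlgebra

variable {D : Type*} [Ring D] [Algebra ℝ D]

/-- Quasi-distinguishing: if `P = σ(d)` is a principal symbol of positive order whose
Poisson bracket with the basic algebra vanishes (i.e. `[d, 𝒜] ⊆ 𝒟^{k-2}`), then
`P ∈ 𝒜` (i.e. `d ∈ 𝒟^{k-1}`). -/
def QuasiDistinguishing (Q : QuantumPoissonAlgebra D) : Prop :=
  ∀ k : ℤ, 1 ≤ k → ∀ d ∈ Q.filt k,
    (∀ u ∈ Q.filt 0, ⁅d, u⁆ ∈ Q.filt (k - 2)) → d ∈ Q.filt (k - 1)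

/-- Non-singular: `𝒜 = [𝒟¹, 𝒜]`. -/
def NonSingular (Q : QuantumPoissonAlgebra D) : Prop :=
  Q.filt 0 ≤ Submodule.span ℝ {x : D | ∃ d ∈ Q.filt 1, ∃ u ∈ Q.filt 0, x = ⁅d, u⁆}

/-- Symplectic: the only central elements are the constants. -/
def Symplectic (_Q : QuantumPoissonAlgebra D) : Prop := ∀ d : D, (∀ t : D, ⁅d, t⁆ = 0) → ∃ c : ℝ, d = c • (1 : D)

/-- Membership in the centralizer `𝒞(𝒟)` of `ad_𝒜`. -/
def InCentralizer (Q : QuantumPoissonAlgebra D) (ψ : D →ₗ[ℝ] D) : Prop :=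
  ∀ d : D, ∀ u ∈ Q.filt 0, ψ ⁅d, u⁆ = ⁅ψ d, u⁆

end QuantumPoissonAlgebra

open QuantumPoissonAlgebra in
/-- in a quasi-distinguishing quantum Poisson algebra,
`{D ∈ 𝒟 : [D, 𝒜] ⊆ 𝒟^i} = 𝒟^{i+1}` for every `i ∈ ℕ`. -/
theorem stmt3 {D : Type*} [Ring D] [Algebra ℝ D] (Q : QuantumPoissonAlgebra D)
    (hqd : Q.QuasiDistinguishing) (i : ℕ) :
    {d : D | ∀ u ∈ Q.filt 0, ⁅d, u⁆ ∈ Q.filt (i : ℤ)} = (Q.filt ((i : ℤ) + 1) : Set D) := by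
  ext d
  simp only [Set.mem_setOf_eq, SetLike.mem_coe]
  constructor
  · intro hd
    obtain ⟨k, hk⟩ := Q.filt_exhaustive d
    obtain ⟨n, hn⟩ := Int.le.dest (le_max_left ((i:ℤ)+1) k)
    have key : ∀ n : ℕ, ∀ k : ℤ, k ≤ (i:ℤ) + 1 + n → d ∈ Q.filt k → d ∈ Q.filt ((i:ℤ)+1) := by
      intro n
      induction n with
      | zero => intro k hk hmem; exact Q.filt_mono (by simpa using hk) hmem
      | succ m ih =>
        intro k hk hmem
        rcases le_or_gt k ((i:ℤ)+1) with h | h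
        · exact Q.filt_mono h hmem
        · have h1 : (1:ℤ) ≤ k := by omega
          have := hqd k h1 d hmem (fun u hu => Q.filt_mono (by omega) (hd u hu))
          exact ih (k-1) (by omega) this
    exact key n _ hn.ge (Q.filt_mono (le_max_right _ _) hk)
  · intro hd u hu
    simpa using Q.lie_mem _ _ d u hd hu
end

section
/- Let 𝒟 be a quasi-distinguishing quantum Poisson algebra with basic algebra 𝒜. Then every linear map ψ: 𝒟 → 𝒟 commuting with all adjoint actions of elements of 𝒜 (i.e. ψ([D, u]) = [ψ(D), u] for all D ∈ 𝒟, u ∈ 𝒜) preserves the filtration: ψ(𝒟^i) ⊆ 𝒟^i for all i ∈ ℕ. -/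
open QuantumPoissonAlgebra in
/-- in a quasi-distinguishing quantum Poisson algebra, every linear map
`ψ : 𝒟 → 𝒟` commuting with all adjoint actions of elements of the basic algebra `𝒜`
preserves the filtration. -/
theorem stmt4 {D : Type*} [Ring D] [Algebra ℝ D] (Q : QuantumPoissonAlgebra D)
    (hqd : Q.QuasiDistinguishing) (ψ : D →ₗ[ℝ] D) (hψ : Q.InCentralizer ψ) :
    ∀ i : ℕ, ∀ d ∈ Q.filt (i : ℤ), ψ d ∈ Q.filt (i : ℤ) := by
  intro i
  induction i using Nat.strong_induction_on with
  | _ i IH =>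
  intro d hd
  -- brackets with basic elements land in filt (i-1), and ψ of them as well
  have hbr : ∀ u ∈ Q.filt 0, ψ ⁅d, u⁆ ∈ Q.filt ((i : ℤ) - 1) := by
    intro u hu
    have hb : ⁅d, u⁆ ∈ Q.filt ((i : ℤ) + 0 - 1) := Q.lie_mem _ _ _ _ hd hu
    rcases Nat.eq_zero_or_pos i with hi | hi
    · subst hi
      have : ⁅d, u⁆ = 0 := by
        have := hb
        rw [show ((0:ℕ) : ℤ) + 0 - 1 = -1 by norm_num, Q.filt_bot (-1) (by norm_num)] at this
        simpa using this
      rw [this]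
      simp
    · have h1 : ψ ⁅d, u⁆ ∈ Q.filt ((i - 1 : ℕ) : ℤ) := by
        apply IH (i - 1) (by omega)
        have : ((i : ℤ) + 0 - 1) = ((i - 1 : ℕ) : ℤ) := by omega
        rwa [this] at hb
      have : ((i - 1 : ℕ) : ℤ) = (i : ℤ) - 1 := by omega
      rwa [this] at h1
  -- descent: if ψ d ∈ filt (i + n) then ψ d ∈ filt i
  have key : ∀ n : ℕ, ψ d ∈ Q.filt ((i : ℤ) + n) → ψ d ∈ Q.filt (i : ℤ) := by
    intro n
    induction n with
    | zero => simp
    | succ n ihn =>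
      intro h
      apply ihn
      have h1 : (1 : ℤ) ≤ (i : ℤ) + ((n : ℕ) + 1 : ℕ) := by push_cast; omega
      have hstep := hqd _ h1 _ h ?_
      · have : ((i : ℤ) + ((n : ℕ) + 1 : ℕ) - 1) = (i : ℤ) + n := by push_cast; ring
        rwa [this] at hstep
      · intro u hu
        rw [← hψ d u hu]
        apply Q.filt_mono _ (hbr u hu)
        push_cast; omega
  obtain ⟨k, hk⟩ := Q.filt_exhaustive (ψ d)
  by_cases hki : k ≤ (i : ℤ)
  · exact Q.filt_mono hki hk
  · have hn : (i : ℤ) + ((k - i).toNat : ℤ) = k := by omega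
    exact key (k - (i : ℤ)).toNat (by rwa [hn])
end

section
/- Let 𝒟 be a non-singular and quasi-distinguishing quantum Poisson algebra with basic algebra 𝒜. Then every ψ in the centralizer 𝒞(𝒟) of ad_𝒜 satisfies ψ(u) = ψ(1)·u for all u ∈ 𝒜; in particular the restriction of ψ to 𝒜 is multiplication by a fixed element. -/
section Aux

variable {D : Type*} [Ring D] [Algebra ℝ D]

/-- Leibniz rule for the commutator bracket, second slot. -/
private lemma lieMulAux (a b c : D) : ⁅a, b * c⁆ = ⁅a, b⁆ * c + b * ⁅a, c⁆ := by
  simp only [Ring.lie_def]; noncomm_ring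

/-- Leibniz rule for the commutator bracket, first slot. -/
private lemma mulLieAux (a b c : D) : ⁅a * b, c⁆ = a * ⁅b, c⁆ + ⁅a, c⁆ * b := by
  simp only [Ring.lie_def]; noncomm_ring

/-- The bracket is additive in the first slot over finite sums. -/
private lemma sumLieAux {n : ℕ} (F : Fin n → D) (y : D) :
    ⁅∑ i, F i, y⁆ = ∑ i, ⁅F i, y⁆ := by
  simp only [Ring.lie_def, Finset.sum_mul, Finset.mul_sum, ← Finset.sum_sub_distrib]

/-- Brackets of basic elements vanish. -/
private lemma lieBasicAux (Q : QuantumPoissonAlgebra D) {u v : D}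
    (hu : u ∈ Q.filt 0) (hv : v ∈ Q.filt 0) : ⁅u, v⁆ = 0 := by
  rw [Ring.lie_def, Q.basic_comm u hu v hv, sub_self]

/-- Descent: an element of some filtration level whose brackets with the basic algebra
vanish lies in the basic algebra, by quasi-distinguishing. -/
private lemma descentAux (Q : QuantumPoissonAlgebra D) (hqd : Q.QuasiDistinguishing) :
    ∀ (n : ℕ) (k : ℤ) (x : D), k ≤ (n : ℤ) → x ∈ Q.filt k →
      (∀ v ∈ Q.filt 0, ⁅x, v⁆ = 0) → x ∈ Q.filt 0 := by
  intro n
  induction n with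
  | zero =>
    intro k x hk hx _
    exact Q.filt_mono (by exact_mod_cast hk) hx
  | succ n ih =>
    intro k x hk hx hbr
    by_cases h0 : k ≤ 0
    · exact Q.filt_mono h0 hx
    · have h1 : 1 ≤ k := by omega
      have hx' : x ∈ Q.filt (k - 1) :=
        hqd k h1 x hx (fun u hu => by rw [hbr u hu]; exact zero_mem _)
      exact ih (k - 1) x (by push_cast at hk ⊢; omega) hx' hbr

end Aux

open QuantumPoissonAlgebra in
/-- in a non-singular, quasi-distinguishing quantum Poisson algebra, every
`ψ` in the centralizer of `ad_𝒜` acts on the basic algebra as multiplication by `ψ(1)`. -/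
theorem stmt5 {D : Type*} [Ring D] [Algebra ℝ D] (Q : QuantumPoissonAlgebra D)
    (hns : Q.NonSingular) (hqd : Q.QuasiDistinguishing)
    (ψ : D →ₗ[ℝ] D) (hψ : Q.InCentralizer ψ) :
    ∀ u ∈ Q.filt 0, ψ u = ψ 1 * u := by
  -- ψ preserves the basic algebra (uses quasi-distinguishing)
  have hψ0 : ∀ w ∈ Q.filt 0, ψ w ∈ Q.filt 0 := by
    intro w hw
    obtain ⟨k, hk⟩ := Q.filt_exhaustive (ψ w)
    refine descentAux Q hqd k.toNat k (ψ w) (Int.self_le_toNat k) hk ?_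
    intro v hv
    rw [← hψ w v hv, lieBasicAux Q hw hv, map_zero]
  have hψ1 : ψ 1 ∈ Q.filt 0 := hψ0 1 Q.one_mem
  -- the reduced map φ x = ψ x - x * ψ 1
  set φ : D →ₗ[ℝ] D := ψ - LinearMap.mulRight ℝ (ψ 1) with hφdef
  have hφ : ∀ x : D, φ x = ψ x - x * ψ 1 := by
    intro x; simp [hφdef, LinearMap.mulRight_apply]
  -- φ is in the centralizer
  have hφC : ∀ (d : D), ∀ u ∈ Q.filt 0, φ ⁅d, u⁆ = ⁅φ d, u⁆ := by
    intro d u hu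
    have h1 : ⁅d * ψ 1, u⁆ = d * ⁅ψ 1, u⁆ + ⁅d, u⁆ * ψ 1 := mulLieAux d (ψ 1) u
    have h2 : ⁅ψ 1, u⁆ = 0 := lieBasicAux Q hψ1 hu
    rw [hφ, hφ, show ⁅ψ d - d * ψ 1, u⁆ = ⁅ψ d, u⁆ - ⁅d * ψ 1, u⁆ by simp only [Ring.lie_def]; noncomm_ring, hψ d u hu, h1, h2, mul_zero, zero_add]
  -- φ preserves the basic algebra
  have hφ0 : ∀ w ∈ Q.filt 0, φ w ∈ Q.filt 0 := by
    intro w hw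
    rw [hφ]
    have := Q.mul_mem 0 0 w (ψ 1) hw hψ1
    exact sub_mem (hψ0 w hw) (by simpa using this)
  have hφ1 : φ 1 = 0 := by rw [hφ, one_mul, sub_self]
  -- membership facts for brackets
  have hlie10 : ∀ {d u : D}, d ∈ Q.filt 1 → u ∈ Q.filt 0 → ⁅d, u⁆ ∈ Q.filt 0 := by
    intro d u hd hu
    have := Q.lie_mem 1 0 d u hd hu
    simpa using this
  have hmul00 : ∀ {a b : D}, a ∈ Q.filt 0 → b ∈ Q.filt 0 → a * b ∈ Q.filt 0 := by
    intro a b ha hb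
    have := Q.mul_mem 0 0 a b ha hb
    simpa using this
  -- the L-trick: for u, v basic, any d
  have hLT : ∀ (d : D), ∀ u ∈ Q.filt 0, ∀ v ∈ Q.filt 0,
      ⁅φ (u * d) - u * φ d, v⁆ = φ (u * ⁅d, v⁆) - u * φ ⁅d, v⁆ := by
    intro d u hu v hv
    have h1 : ⁅u * d, v⁆ = u * ⁅d, v⁆ + ⁅u, v⁆ * d := mulLieAux u d v
    have h2 : ⁅u * φ d, v⁆ = u * ⁅φ d, v⁆ + ⁅u, v⁆ * (φ d) := mulLieAux u (φ d) v
    have h3 : ⁅u, v⁆ = 0 := lieBasicAux Q hu hv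
    rw [show ⁅φ (u * d) - u * φ d, v⁆ = ⁅φ (u * d), v⁆ - ⁅u * φ d, v⁆ by simp only [Ring.lie_def]; noncomm_ring, ← hφC (u * d) v hv, h1, h3, zero_mul, add_zero, h2, h3, zero_mul,
      add_zero, hφC d v hv]
  -- identity (A): for u v basic, d in filt 1
  have hA : ∀ d ∈ Q.filt 1, ∀ u ∈ Q.filt 0, ∀ v ∈ Q.filt 0,
      φ (v * ⁅d, u⁆) + φ (u * ⁅d, v⁆) = v * φ ⁅d, u⁆ + u * φ ⁅d, v⁆ := by
    intro d hd u hu v hv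
    have huv : u * v ∈ Q.filt 0 := hmul00 hu hv
    have key : φ ⁅d, u * v⁆ = ⁅φ d, u * v⁆ := hφC d (u * v) huv
    have e1 : ⁅d, u * v⁆ = ⁅d, u⁆ * v + u * ⁅d, v⁆ := lieMulAux d u v
    have e2 : ⁅φ d, u * v⁆ = ⁅φ d, u⁆ * v + u * ⁅φ d, v⁆ := lieMulAux (φ d) u v
    have hdu : ⁅d, u⁆ ∈ Q.filt 0 := hlie10 hd hu
    have hdv : ⁅d, v⁆ ∈ Q.filt 0 := hlie10 hd hv
    have c1 : ⁅d, u⁆ * v = v * ⁅d, u⁆ := Q.basic_comm _ hdu v hv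
    have c2 : φ ⁅d, u⁆ * v = v * φ ⁅d, u⁆ := Q.basic_comm _ (hφ0 _ hdu) v hv
    calc φ (v * ⁅d, u⁆) + φ (u * ⁅d, v⁆)
        = φ (⁅d, u⁆ * v + u * ⁅d, v⁆) := by rw [map_add, c1]
      _ = φ ⁅d, u * v⁆ := by rw [e1]
      _ = ⁅φ d, u⁆ * v + u * ⁅φ d, v⁆ := by rw [key, e2]
      _ = v * φ ⁅d, u⁆ + u * φ ⁅d, v⁆ := by
          rw [← hφC d u hu, ← hφC d v hv, c2]
  -- get a non-singularity decomposition of 1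
  have h1span : (1 : D) ∈ Submodule.span ℝ
      {x : D | ∃ d ∈ Q.filt 1, ∃ u ∈ Q.filt 0, x = ⁅d, u⁆} := hns Q.one_mem
  rw [Submodule.mem_span_set'] at h1span
  obtain ⟨n, f, g, hg⟩ := h1span
  have hgmem : ∀ i : Fin n, ∃ d ∈ Q.filt 1, ∃ u ∈ Q.filt 0, (g i : D) = ⁅d, u⁆ :=
    fun i => (g i).2
  choose dd hdd uu huu heq using hgmem
  -- absorb scalars into the filt-1 elements
  set e : Fin n → D := fun i => f i • dd i with he_def
  have he1 : ∀ i, e i ∈ Q.filt 1 := fun i => Submodule.smul_mem _ _ (hdd i)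
  have hsum : ∑ i, ⁅e i, uu i⁆ = (1 : D) := by
    have : ∀ i, ⁅e i, uu i⁆ = f i • (g i : D) := by
      intro i; rw [he_def]; simp only [smul_lie]; rw [show ⁅f i • dd i, uu i⁆ = f i • ⁅dd i, uu i⁆ by simp only [Ring.lie_def, smul_mul_assoc, mul_smul_comm, smul_sub], ← heq i]
    rw [Finset.sum_congr rfl (fun i _ => this i)]
    exact hg
  -- the element E with φ = -⁅E, ·⁆ on the basic algebra
  set E : D := ∑ i, (φ (uu i * e i) - uu i * φ (e i)) with hE_def
  have hEkey : ∀ u ∈ Q.filt 0, ⁅E, u⁆ = -φ u := by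
    intro u hu
    have step : ∀ i : Fin n,
        ⁅φ (uu i * e i) - uu i * φ (e i), u⁆
          = u * φ ⁅e i, uu i⁆ - φ (u * ⁅e i, uu i⁆) := by
      intro i
      rw [hLT (e i) (uu i) (huu i) u hu, sub_eq_sub_iff_add_eq_add,
        hA (e i) (he1 i) u hu (uu i) (huu i)]
      exact add_comm _ _
    rw [hE_def, sumLieAux, Finset.sum_congr rfl (fun i _ => step i)]
    rw [Finset.sum_sub_distrib, ← Finset.mul_sum, ← map_sum, ← map_sum, ← Finset.mul_sum,
      hsum, mul_one, hφ1, mul_zero, zero_sub]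
  -- φ is a derivation on the basic algebra
  have hder : ∀ u ∈ Q.filt 0, ∀ w ∈ Q.filt 0,
      φ (u * w) = u * φ w + φ u * w := by
    intro u hu w hw
    have huw : u * w ∈ Q.filt 0 := hmul00 hu hw
    have h1 : φ (u * w) = -⁅E, u * w⁆ := by rw [hEkey _ huw, neg_neg]
    have h2 : ⁅E, u * w⁆ = ⁅E, u⁆ * w + u * ⁅E, w⁆ := lieMulAux E u w
    rw [h1, h2, hEkey u hu, hEkey w hw]
    noncomm_ring
  -- the antisymmetry: φ(u) ⁅d,v⁆ = - φ(v) ⁅d,u⁆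
  have hanti : ∀ d ∈ Q.filt 1, ∀ u ∈ Q.filt 0, ∀ v ∈ Q.filt 0,
      φ v * ⁅d, u⁆ + φ u * ⁅d, v⁆ = 0 := by
    intro d hd u hu v hv
    have hdu : ⁅d, u⁆ ∈ Q.filt 0 := hlie10 hd hu
    have hdv : ⁅d, v⁆ ∈ Q.filt 0 := hlie10 hd hv
    have hAid := hA d hd u hu v hv
    have e1 : φ (v * ⁅d, u⁆) = v * φ ⁅d, u⁆ + φ v * ⁅d, u⁆ := hder v hv _ hdu
    have e2 : φ (u * ⁅d, v⁆) = u * φ ⁅d, v⁆ + φ u * ⁅d, v⁆ := hder u hu _ hdv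
    calc φ v * ⁅d, u⁆ + φ u * ⁅d, v⁆
        = (φ (v * ⁅d, u⁆) + φ (u * ⁅d, v⁆)) - (v * φ ⁅d, u⁆ + u * φ ⁅d, v⁆) := by
          rw [e1, e2]; abel
      _ = 0 := by rw [hAid, sub_self]
  -- same-row lemma: φ(u) ⁅d,v⁆ ⁅d,w⁆ = 0
  have hrow : ∀ d ∈ Q.filt 1, ∀ u ∈ Q.filt 0, ∀ v ∈ Q.filt 0, ∀ w ∈ Q.filt 0,
      φ u * ⁅d, v⁆ * ⁅d, w⁆ = 0 := by
    intro d hd u hu v hv w hw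
    have hdu : ⁅d, u⁆ ∈ Q.filt 0 := hlie10 hd hu
    have hdv : ⁅d, v⁆ ∈ Q.filt 0 := hlie10 hd hv
    have hdw : ⁅d, w⁆ ∈ Q.filt 0 := hlie10 hd hw
    have comm : ∀ {a b : D}, a ∈ Q.filt 0 → b ∈ Q.filt 0 → a * b = b * a :=
      fun ha hb => Q.basic_comm _ ha _ hb
    have s1 : φ u * ⁅d, v⁆ = -(φ v * ⁅d, u⁆) :=
      eq_neg_of_add_eq_zero_left (hanti d hd v hv u hu)
    have s2 : φ v * ⁅d, w⁆ = -(φ w * ⁅d, v⁆) :=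
      eq_neg_of_add_eq_zero_left (hanti d hd w hw v hv)
    have s3 : φ w * ⁅d, u⁆ = -(φ u * ⁅d, w⁆) :=
      eq_neg_of_add_eq_zero_left (hanti d hd u hu w hw)
    have key : φ u * ⁅d, v⁆ * ⁅d, w⁆ = -(φ u * ⁅d, v⁆ * ⁅d, w⁆) := by
      calc φ u * ⁅d, v⁆ * ⁅d, w⁆
          = -(φ v * ⁅d, u⁆) * ⁅d, w⁆ := by rw [s1]
        _ = -(φ v * (⁅d, u⁆ * ⁅d, w⁆)) := by rw [neg_mul, mul_assoc]
        _ = -(φ v * (⁅d, w⁆ * ⁅d, u⁆)) := by rw [comm hdu hdw]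
        _ = -(φ v * ⁅d, w⁆ * ⁅d, u⁆) := by rw [mul_assoc]
        _ = -(-(φ w * ⁅d, v⁆) * ⁅d, u⁆) := by rw [s2]
        _ = φ w * ⁅d, v⁆ * ⁅d, u⁆ := by rw [neg_mul, neg_neg]
        _ = φ w * (⁅d, v⁆ * ⁅d, u⁆) := by rw [mul_assoc]
        _ = φ w * (⁅d, u⁆ * ⁅d, v⁆) := by rw [comm hdv hdu]
        _ = φ w * ⁅d, u⁆ * ⁅d, v⁆ := by rw [mul_assoc]
        _ = -(φ u * ⁅d, w⁆) * ⁅d, v⁆ := by rw [s3]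
        _ = -(φ u * (⁅d, w⁆ * ⁅d, v⁆)) := by rw [neg_mul, mul_assoc]
        _ = -(φ u * (⁅d, v⁆ * ⁅d, w⁆)) := by rw [comm hdw hdv]
        _ = -(φ u * ⁅d, v⁆ * ⁅d, w⁆) := by rw [mul_assoc]
    have h2 : (2 : ℝ) • (φ u * ⁅d, v⁆ * ⁅d, w⁆) = 0 := by
      rw [two_smul]
      nth_rewrite 2 [key]
      rw [add_neg_cancel]
    have := smul_eq_zero.mp h2
    rcases this with h | h
    · exact absurd h (by norm_num)
    · exact h
  -- set up the diagonal elements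
  set N : Fin n → D := fun k => ⁅e k, uu k⁆ with hN_def
  have hN0 : ∀ k, N k ∈ Q.filt 0 := fun k => hlie10 (he1 k) (huu k)
  have hNsum : ∑ k, N k = (1 : D) := hsum
  -- the kill lemma
  have kill : ∀ (m : ℕ) (T : Finset (Fin n)) (c : D),
      (Finset.univ \ T).card ≤ m → c ∈ Q.filt 0 →
      (∀ k, c * N k * N k = 0) → (∀ k ∈ T, c * N k = 0) → c = 0 := by
    intro m
    induction m with
    | zero =>
      intro T c hcard hc0 _ hT
      have hempty : Finset.univ \ T = ∅ := Finset.card_eq_zero.mp (Nat.le_zero.mp hcard)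
      have hall : ∀ k : Fin n, k ∈ T := by
        intro k
        by_contra hk
        have : k ∈ Finset.univ \ T := Finset.mem_sdiff.mpr ⟨Finset.mem_univ k, hk⟩
        rw [hempty] at this
        exact absurd this (Finset.notMem_empty k)
      calc c = c * 1 := (mul_one c).symm
        _ = c * ∑ k, N k := by rw [hNsum]
        _ = ∑ k, c * N k := Finset.mul_sum _ _ _
        _ = ∑ k : Fin n, (0 : D) := Finset.sum_congr rfl (fun k _ => hT k (hall k))
        _ = 0 := Finset.sum_const_zero
    | succ m ih =>
      intro T c hcard hc0 hcrow hT
      have main : ∀ k : Fin n, c * N k = 0 := by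
        intro k
        by_cases hk : k ∈ T
        · exact hT k hk
        · -- apply ih to c * N k with T' = insert k T
          have hkT : k ∈ Finset.univ \ T := Finset.mem_sdiff.mpr ⟨Finset.mem_univ k, hk⟩
          have hcard' : (Finset.univ \ insert k T).card ≤ m := by
            have : Finset.univ \ insert k T = (Finset.univ \ T).erase k := by
              ext x
              simp only [Finset.mem_sdiff, Finset.mem_insert, Finset.mem_erase,
                Finset.mem_univ, true_and]
              tauto
            rw [this, Finset.card_erase_of_mem hkT]
            omega
          have hc0' : c * N k ∈ Q.filt 0 := hmul00 hc0 (hN0 k)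
          have comm : ∀ {a b : D}, a ∈ Q.filt 0 → b ∈ Q.filt 0 → a * b = b * a :=
            fun ha hb => Q.basic_comm _ ha _ hb
          have hswap : ∀ l : Fin n, c * N k * N l = c * N l * N k := by
            intro l
            rw [mul_assoc, comm (hN0 k) (hN0 l), ← mul_assoc]
          have hcrow' : ∀ l, c * N k * N l * N l = 0 := by
            intro l
            calc c * N k * N l * N l
                = c * N l * N k * N l := by rw [hswap l]
              _ = c * N l * (N k * N l) := by rw [mul_assoc]
              _ = c * N l * (N l * N k) := by rw [comm (hN0 k) (hN0 l)]
              _ = c * N l * N l * N k := by rw [← mul_assoc]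
              _ = 0 * N k := by rw [hcrow l]
              _ = 0 := zero_mul _
          have hT' : ∀ l ∈ insert k T, c * N k * N l = 0 := by
            intro l hl
            rcases Finset.mem_insert.mp hl with h | h
            · rw [h]; exact hcrow k
            · rw [hswap l, hT l h, zero_mul]
          have := ih (insert k T) (c * N k) hcard' hc0' hcrow' hT'
          exact this
      calc c = c * 1 := (mul_one c).symm
        _ = c * ∑ k, N k := by rw [hNsum]
        _ = ∑ k, c * N k := Finset.mul_sum _ _ _
        _ = ∑ k : Fin n, (0 : D) := Finset.sum_congr rfl (fun k _ => main k)
        _ = 0 := Finset.sum_const_zero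
  -- conclude φ = 0 on the basic algebra
  have hφzero : ∀ x ∈ Q.filt 0, φ x = 0 := by
    intro x hx
    refine kill (Finset.univ \ (∅ : Finset (Fin n))).card ∅ (φ x) le_rfl (hφ0 x hx) ?_
      (fun k hk => absurd hk (Finset.notMem_empty k))
    intro k
    exact hrow (e k) (he1 k) x hx (uu k) (huu k) (uu k) (huu k)
  -- finish
  intro u hu
  have h0 : φ u = 0 := hφzero u hu
  rw [hφ] at h0
  have huψ : ψ u = u * ψ 1 := sub_eq_zero.mp h0
  rw [huψ, Q.basic_comm u hu (ψ 1) hψ1]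
end

section
/- Let A = 𝒜(E) and B = 𝒜(F) be the ℕ-graded commutative ℝ-algebras A = ⊕_{k≥0} A_k and B = ⊕_{k≥0} B_k of fiberwise polynomial smooth functions on vector bundles E → M and F → N. Then any isomorphism of ℝ-algebras Ψ: A → B satisfies Ψ(A_0) = B_0. -/
open Bundle
open scoped Manifold

/-! Two smooth vector bundles in the Mathlib sense: `π : E → M` (denoted `E` over base
`B`, model fiber `F`) and `η : F → N` (denoted `E₂` over base `B₂`, model fiber `F₂`). -/

variable
  {EB : Type*} [NormedAddCommGroup EB] [NormedSpace ℝ EB]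
  {HB : Type*} [TopologicalSpace HB] (IB : ModelWithCorners ℝ EB HB)
  {B : Type*} [TopologicalSpace B] [ChartedSpace HB B] [IsManifold IB ((⊤ : ℕ∞) : WithTop ℕ∞) B]
  {F : Type*} [NormedAddCommGroup F] [NormedSpace ℝ F]
  (E : B → Type*) [∀ x, AddCommGroup (E x)] [∀ x, Module ℝ (E x)]
  [TopologicalSpace (TotalSpace F E)] [∀ x, TopologicalSpace (E x)]
  [FiberBundle F E] [VectorBundle ℝ F E] [ContMDiffVectorBundle ((⊤ : ℕ∞) : WithTop ℕ∞) F E IB]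
  {EB₂ : Type*} [NormedAddCommGroup EB₂] [NormedSpace ℝ EB₂]
  {HB₂ : Type*} [TopologicalSpace HB₂] (IB₂ : ModelWithCorners ℝ EB₂ HB₂)
  {B₂ : Type*} [TopologicalSpace B₂] [ChartedSpace HB₂ B₂]
  [IsManifold IB₂ ((⊤ : ℕ∞) : WithTop ℕ∞) B₂]
  {F₂ : Type*} [NormedAddCommGroup F₂] [NormedSpace ℝ F₂]
  (E₂ : B₂ → Type*) [∀ x, AddCommGroup (E₂ x)] [∀ x, Module ℝ (E₂ x)]
  [TopologicalSpace (TotalSpace F₂ E₂)] [∀ x, TopologicalSpace (E₂ x)]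
  [FiberBundle F₂ E₂] [VectorBundle ℝ F₂ E₂] [ContMDiffVectorBundle ((⊤ : ℕ∞) : WithTop ℕ∞) F₂ E₂ IB₂]

/-- smooth real valued functions on the total space of a bundle -/
def Sm {EB : Type*} [NormedAddCommGroup EB] [NormedSpace ℝ EB]
    {HB : Type*} [TopologicalSpace HB] (IB : ModelWithCorners ℝ EB HB)
    {B : Type*} [TopologicalSpace B] [ChartedSpace HB B]
    {F : Type*} [NormedAddCommGroup F] [NormedSpace ℝ F]
    (E : B → Type*) [TopologicalSpace (TotalSpace F E)] [∀ x, TopologicalSpace (E x)]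
    [FiberBundle F E] (f : TotalSpace F E → ℝ) : Prop :=
  ContMDiff (IB.prod 𝓘(ℝ, F)) 𝓘(ℝ, ℝ) (⊤ : ℕ∞) f

/-- fiberwise homogeneous of degree `k` -/
def Homog {B : Type*} {F : Type*} (E : B → Type*) [∀ x, AddCommGroup (E x)]
    [∀ x, Module ℝ (E x)] (k : ℕ) (f : TotalSpace F E → ℝ) : Prop :=
  ∀ (x : B) (v : E x) (t : ℝ), f ⟨x, t • v⟩ = t ^ k * f ⟨x, v⟩

variable (F) in
/-- `𝒜(E)`: the ℝ-algebra of fiberwise polynomial smooth functions on the total space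
(the subalgebra generated by the smooth fiberwise homogeneous functions). -/
def AE : Subalgebra ℝ (TotalSpace F E → ℝ) :=
  Algebra.adjoin ℝ {g : TotalSpace F E → ℝ | Sm IB E g ∧ ∃ k : ℕ, Homog E k g}

variable (F) in
/-- `𝒜^k(E)`: degree-`k` homogeneous component of `𝒜(E)`. -/
def AL (k : ℕ) : Submodule ℝ (TotalSpace F E → ℝ) :=
  Submodule.span ℝ {g : TotalSpace F E → ℝ | Sm IB E g ∧ Homog E k g}


section Aux

set_option linter.unusedSectionVars false

variable {EB : Type*} [NormedAddCommGroup EB] [NormedSpace ℝ EB]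
  {HB : Type*} [TopologicalSpace HB] {IB : ModelWithCorners ℝ EB HB}
  {B : Type*} [TopologicalSpace B] [ChartedSpace HB B]
  {F : Type*} [NormedAddCommGroup F] [NormedSpace ℝ F]
  {E : B → Type*} [∀ x, AddCommGroup (E x)] [∀ x, Module ℝ (E x)]
  [TopologicalSpace (TotalSpace F E)] [∀ x, TopologicalSpace (E x)]
  [FiberBundle F E]

lemma Sm_const (c : ℝ) : Sm (F := F) IB E (fun _ => c) := contMDiff_const

lemma Sm.add {f g : TotalSpace F E → ℝ} (hf : Sm IB E f) (hg : Sm IB E g) :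
    Sm IB E (f + g) :=
  ContMDiff.add hf hg

lemma Sm.mul {f g : TotalSpace F E → ℝ} (hf : Sm IB E f) (hg : Sm IB E g) :
    Sm IB E (f * g) :=
  ContMDiff.mul hf hg

lemma Sm_zero : Sm (F := F) IB E (0 : TotalSpace F E → ℝ) := Sm_const 0

lemma Sm.smul (c : ℝ) {f : TotalSpace F E → ℝ} (hf : Sm IB E f) :
    Sm IB E (c • f) :=
  ContMDiff.mul (Sm_const c) hf

variable (IB F E) in
/-- The smooth fiberwise-constant functions form a submodule. -/
def AL0' : Submodule ℝ (TotalSpace F E → ℝ) where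
  carrier := {g | Sm IB E g ∧ Homog E 0 g}
  add_mem' := by
    rintro a b ⟨ha, ha'⟩ ⟨hb, hb'⟩
    refine ⟨ha.add hb, fun x v t => ?_⟩
    simp only [Pi.add_apply, ha' x v t, hb' x v t]
    ring
  zero_mem' := ⟨Sm_zero, fun x v t => by simp⟩
  smul_mem' := by
    rintro c a ⟨ha, ha'⟩
    refine ⟨ha.smul c, fun x v t => ?_⟩
    simp only [Pi.smul_apply, ha' x v t, smul_eq_mul]
    ring

/-- The degree-0 part is exactly the smooth fiberwise constant functions. -/
lemma mem_AL0 {f : TotalSpace F E → ℝ} :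
    f ∈ AL IB F E 0 ↔ Sm IB E f ∧ Homog E 0 f := by
  constructor
  · intro h
    have hle : AL IB F E 0 ≤ AL0' IB F E :=
      Submodule.span_le.2 fun g hg => hg
    exact hle h
  · intro h
    exact Submodule.subset_span h

variable (IB F E) in
/-- The smooth functions form a subalgebra. -/
def SmSubalg : Subalgebra ℝ (TotalSpace F E → ℝ) where
  carrier := {g | Sm IB E g}
  mul_mem' := fun ha hb => Sm.mul ha hb
  add_mem' := fun ha hb => Sm.add ha hb
  algebraMap_mem' := fun r => Sm_const r

/-- Every element of `𝒜(E)` is smooth. -/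
lemma AE_smooth {f : TotalSpace F E → ℝ} (hf : f ∈ AE IB F E) : Sm IB E f := by
  have h : AE IB F E ≤ SmSubalg IB F E :=
    Algebra.adjoin_le fun g hg => hg.1
  exact h hf

variable (F E) in
/-- The functions which are polynomial along each ray form a subalgebra. -/
def PolySubalg : Subalgebra ℝ (TotalSpace F E → ℝ) where
  carrier := {g | ∀ (x : B) (v : E x),
    ∃ p : Polynomial ℝ, ∀ t : ℝ, g ⟨x, t • v⟩ = p.eval t}
  mul_mem' := by
    rintro a b ha hb x v
    obtain ⟨p, hp⟩ := ha x v; obtain ⟨q, hq⟩ := hb x v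
    exact ⟨p * q, fun t => by simp only [Pi.mul_apply, hp t, hq t, Polynomial.eval_mul]⟩
  add_mem' := by
    rintro a b ha hb x v
    obtain ⟨p, hp⟩ := ha x v; obtain ⟨q, hq⟩ := hb x v
    exact ⟨p + q, fun t => by simp only [Pi.add_apply, hp t, hq t, Polynomial.eval_add]⟩
  algebraMap_mem' := fun r x v => ⟨Polynomial.C r, fun t => by rw [Polynomial.eval_C]; rfl⟩

/-- Every element of `𝒜(E)` restricts to a polynomial function along each ray. -/
lemma AE_poly {f : TotalSpace F E → ℝ} (hf : f ∈ AE IB F E) (x : B) (v : E x) :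
    ∃ p : Polynomial ℝ, ∀ t : ℝ, f ⟨x, t • v⟩ = p.eval t := by
  have h : AE IB F E ≤ PolySubalg F E := by
    apply Algebra.adjoin_le
    rintro g ⟨-, k, hg⟩ y w
    refine ⟨Polynomial.C (g ⟨y, w⟩) * Polynomial.X ^ k, fun t => ?_⟩
    rw [hg y w t, Polynomial.eval_mul, Polynomial.eval_C, Polynomial.eval_pow,
      Polynomial.eval_X, mul_comm]
  exact h hf x v

/-- Algebraic characterization of the degree-zero part. -/
lemma mem_AL0_iff_isUnit (u : AE IB F E) :
    ((u : TotalSpace F E → ℝ) ∈ AL IB F E 0) ↔ IsUnit (u ^ 2 + 1) := by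
  constructor
  · rintro hu
    obtain ⟨hsm, hhom⟩ := mem_AL0.1 hu
    have hpos : ∀ z, (u : TotalSpace F E → ℝ) z ^ 2 + 1 ≠ 0 := fun z => by positivity
    have hgsm : Sm (F := F) IB E (fun z => ((u : TotalSpace F E → ℝ) z ^ 2 + 1)⁻¹) := by
      apply ContMDiff.inv₀ _ hpos
      have hfun : (fun z => ((u : TotalSpace F E → ℝ) z ^ 2 + 1)) =
          (((u : TotalSpace F E → ℝ) * (u : TotalSpace F E → ℝ)) + fun _ => (1 : ℝ)) := by
        funext z; simp [sq]
      rw [hfun]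
      exact (hsm.mul hsm).add (Sm_const 1)
    have hghom : Homog E 0 (fun z => ((u : TotalSpace F E → ℝ) z ^ 2 + 1)⁻¹) :=
      fun x v t => by simp [hhom x v t]
    have hgmem : (fun z => ((u : TotalSpace F E → ℝ) z ^ 2 + 1)⁻¹) ∈ AE IB F E :=
      Algebra.subset_adjoin ⟨hgsm, 0, hghom⟩
    refine IsUnit.of_mul_eq_one ⟨_, hgmem⟩ ?_
    ext z
    show ((u : TotalSpace F E → ℝ) z ^ 2 + 1) * ((u : TotalSpace F E → ℝ) z ^ 2 + 1)⁻¹ = 1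
    exact mul_inv_cancel₀ (hpos z)
  · rintro h
    obtain ⟨b, hb⟩ := h.exists_right_inv
    have hw1 : ∀ z, ((u : TotalSpace F E → ℝ) z ^ 2 + 1) * (b : TotalSpace F E → ℝ) z = 1 := by
      intro z
      have h1 := congrFun (congrArg Subtype.val hb) z
      simpa using h1
    refine mem_AL0.2 ⟨AE_smooth u.2, fun x v t => ?_⟩
    obtain ⟨p, hp⟩ := AE_poly u.2 x v
    obtain ⟨q, hq⟩ := AE_poly b.2 x v
    have hpq : (p ^ 2 + 1) * q = 1 := by
      apply Polynomial.funext
      intro s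
      have h2 := hw1 ⟨x, s • v⟩
      simpa [hp s, hq s] using h2
    have hdeg : p.natDegree = 0 := by
      by_contra hd
      have hq0 : q ≠ 0 := by rintro rfl; simp at hpq
      have hp20 : p ^ 2 + 1 ≠ 0 := by rintro hcon; rw [hcon] at hpq; simp at hpq
      have h1 : (p ^ 2 + 1).natDegree + q.natDegree = 0 := by
        rw [← Polynomial.natDegree_mul hp20 hq0, hpq, Polynomial.natDegree_one]
      have h2 : (p ^ 2).natDegree = 2 * p.natDegree := Polynomial.natDegree_pow p 2
      have h3 : (p ^ 2 + 1).natDegree = 2 * p.natDegree := by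
        rw [Polynomial.natDegree_add_eq_left_of_natDegree_lt, h2]
        rw [Polynomial.natDegree_one, h2]; omega
      omega
    have hc : p = Polynomial.C (p.coeff 0) := Polynomial.eq_C_of_natDegree_eq_zero hdeg
    have heval : ∀ s : ℝ, p.eval s = p.coeff 0 := fun s => by
      conv_lhs => rw [hc]
      rw [Polynomial.eval_C]
    have h1 : (u : TotalSpace F E → ℝ) ⟨x, t • v⟩ = p.coeff 0 := by
      rw [hp t, heval]
    have h2 : (u : TotalSpace F E → ℝ) ⟨x, v⟩ = p.coeff 0 := by
      have h3 := hp 1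
      rw [one_smul] at h3
      rw [h3, heval]
    rw [h1, h2]; ring

end Aux

set_option synthInstance.maxHeartbeats 1000000 in
set_option maxHeartbeats 1000000 in
set_option linter.unusedSectionVars false in
/-- any isomorphism of ℝ-algebras `Ψ : 𝒜(E) → 𝒜(F)` between the algebras
of fiberwise polynomial smooth functions of two vector bundles maps the degree-zero part
`𝒜⁰(E)` onto `𝒜⁰(F)`. -/
theorem stmt8 (Ψ : AE IB F E ≃ₐ[ℝ] AE IB₂ F₂ E₂) :
    ∀ u : AE IB F E,
      ((u : TotalSpace F E → ℝ) ∈ AL IB F E 0) ↔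
      ((Ψ u : TotalSpace F₂ E₂ → ℝ) ∈ AL IB₂ F₂ E₂ 0) := by
  intro u
  rw [mem_AL0_iff_isUnit, mem_AL0_iff_isUnit]
  have hmap : Ψ (u ^ 2 + 1) = Ψ u ^ 2 + 1 := by
    rw [map_add, map_pow, map_one]
  constructor
  · intro h
    have h2 := h.map Ψ
    rwa [hmap] at h2
  · intro h
    have h2 := h.map Ψ.symm
    rw [← hmap, AlgEquiv.symm_apply_apply] at h2
    exact h2
end
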